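/- Let ρ_{AB} be a density matrix on a bipartite finite-dimensional Hilbert space H_A ⊗ H_B, and let |ψ⟩ ∈ H_A, |φ⟩ ∈ H_B be unit vectors. Define F_A := ⟨ψ|ρ_A|ψ⟩, F_B := ⟨φ|ρ_B|φ⟩ (with ρ_A, ρ_B the reduced states) and F_{AB} := ⟨ψ⊗φ|ρ_{AB}|ψ⊗φ⟩. Then √(1−F_A) + √(1−F_B) ≥ (2/3)(1−F_{AB}). -/

import Mathlib

open scoped BigOperators ComplexOrder Matrix

-- Hilbert–Schmidt (Frobenius) norm: `hsNorm A = √(Tr(AᴴA))`.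
noncomputable def hsNorm {m n : Type*} [Fintype m] [Fintype n] (A : Matrix m n ℂ) : ℝ :=
  Real.sqrt ((Aᴴ * A).trace).re

-- Trace (Schatten-1) norm: `traceNorm A = Tr √(AᴴA)`.
noncomputable def traceNorm {m n : Type*} [Fintype m] [Fintype n] [DecidableEq n]
    (A : Matrix m n ℂ) : ℝ :=
  (((Matrix.isHermitian_conjTranspose_mul_self A).eigenvectorUnitary.1 *
      Matrix.diagonal (((↑) : ℝ → ℂ) ∘ (√·) ∘ (Matrix.isHermitian_conjTranspose_mul_self A).eigenvalues) *
      (star (Matrix.isHermitian_conjTranspose_mul_self A).eigenvectorUnitary : Matrix n n ℂ)).trace).re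

-- Partial trace over the second tensor factor.
noncomputable def ptrace₂ {a b : Type*} [Fintype a] [Fintype b]
    (X : Matrix (a × b) (a × b) ℂ) : Matrix a a ℂ :=
  Matrix.of fun i j => ∑ k : b, X (i, k) (j, k)

-- Partial trace over the first tensor factor.
noncomputable def ptrace₁ {a b : Type*} [Fintype a] [Fintype b]
    (X : Matrix (a × b) (a × b) ℂ) : Matrix b b ℂ :=
  Matrix.of fun i j => ∑ k : a, X (k, i) (k, j)

open Matrix
open scoped Kronecker

lemma psd_of_proj {n : Type*} [Fintype n] [DecidableEq n] {P : Matrix n n ℂ}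
    (h1 : Pᴴ = P) (h2 : P * P = P) : P.PosSemidef :=
  by have h := Matrix.posSemidef_conjTranspose_mul_self P; rwa [h1, h2] at h

lemma trace_re_nonneg' {n : Type*} [Fintype n] [DecidableEq n] {N : Matrix n n ℂ}
    (hN : N.PosSemidef) : 0 ≤ N.trace.re := by
  have h : ∀ i, 0 ≤ (N i i).re := by
    intro i
    have h0 := hN.dotProduct_mulVec_nonneg (Pi.single i 1)
    have he : (star (Pi.single i 1) ⬝ᵥ N *ᵥ Pi.single i 1 : ℂ) = N i i := by
      simp [dotProduct, mulVec, Pi.single_apply]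
    rw [he] at h0
    exact (Complex.le_def.mp h0).1
  rw [Matrix.trace]
  simpa using Finset.sum_nonneg fun i _ => h i

lemma trace_mul_re_nonneg' {n : Type*} [Fintype n] [DecidableEq n]
    {ρ M : Matrix n n ℂ} (hρ : ρ.PosSemidef) (hM : M.PosSemidef) :
    0 ≤ ((ρ * M).trace).re := by
  obtain ⟨B, rfl⟩ : ∃ B : Matrix n n ℂ, M = Bᴴ * B := by
    open MatrixOrder in exact CStarAlgebra.nonneg_iff_eq_star_mul_self.mp hM.nonneg
  have h : (ρ * (Bᴴ * B)).trace = (B * ρ * Bᴴ).trace := by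
    rw [← Matrix.mul_assoc, Matrix.trace_mul_cycle]
  rw [h]
  exact trace_re_nonneg' (hρ.mul_mul_conjTranspose_same B)

lemma traceA_eq (a b : ℕ) (ρ : Matrix (Fin a × Fin b) (Fin a × Fin b) ℂ) (ψ : Fin a → ℂ) :
    (ρ * (vecMulVec ψ (star ψ) ⊗ₖ (1 : Matrix (Fin b) (Fin b) ℂ))).trace
      = star ψ ⬝ᵥ (ptrace₂ ρ *ᵥ ψ) := by
  simp only [Matrix.trace, Matrix.diag, Matrix.mul_apply, kroneckerMap_apply,
    vecMulVec_apply, Matrix.one_apply, dotProduct, mulVec, ptrace₂, Matrix.of_apply,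
    Pi.star_apply, mul_ite, mul_one, mul_zero, Finset.mul_sum, Finset.sum_mul,
    Fintype.sum_prod_type, Finset.sum_ite_eq', Finset.mem_univ, if_true]
  refine Finset.sum_congr rfl fun i _ => ?_
  rw [Finset.sum_comm]
  exact Finset.sum_congr rfl fun j _ => Finset.sum_congr rfl fun k _ => by ring

lemma traceB_eq (a b : ℕ) (ρ : Matrix (Fin a × Fin b) (Fin a × Fin b) ℂ) (φ : Fin b → ℂ) :
    (ρ * ((1 : Matrix (Fin a) (Fin a) ℂ) ⊗ₖ vecMulVec φ (star φ))).trace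
      = star φ ⬝ᵥ (ptrace₁ ρ *ᵥ φ) := by
  simp only [Matrix.trace, Matrix.diag, Matrix.mul_apply, kroneckerMap_apply,
    vecMulVec_apply, Matrix.one_apply, dotProduct, mulVec, ptrace₁, Matrix.of_apply,
    Pi.star_apply, ite_mul, one_mul, zero_mul, mul_ite, mul_one, mul_zero,
    Finset.mul_sum, Finset.sum_mul, Finset.sum_ite_irrel, Finset.sum_const_zero,
    Fintype.sum_prod_type, Finset.sum_ite_eq', Finset.sum_ite_eq, Finset.mem_univ, if_true]
  rw [Finset.sum_comm]
  refine Finset.sum_congr rfl fun k _ => ?_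
  rw [Finset.sum_comm]
  exact Finset.sum_congr rfl fun i _ => Finset.sum_congr rfl fun j _ => by ring

lemma traceAB_eq (a b : ℕ) (ρ : Matrix (Fin a × Fin b) (Fin a × Fin b) ℂ)
    (ψ : Fin a → ℂ) (φ : Fin b → ℂ) :
    (ρ * (vecMulVec ψ (star ψ) ⊗ₖ vecMulVec φ (star φ))).trace
      = ((star fun p : Fin a × Fin b => ψ p.1 * φ p.2) ⬝ᵥ
          (ρ *ᵥ fun p : Fin a × Fin b => ψ p.1 * φ p.2)) := by
  simp only [Matrix.trace, Matrix.diag, Matrix.mul_apply, kroneckerMap_apply,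
    vecMulVec_apply, dotProduct, mulVec, Pi.star_apply,
    Finset.mul_sum, Finset.sum_mul, Fintype.sum_prod_type]
  refine Finset.sum_congr rfl fun i _ => Finset.sum_congr rfl fun k _ =>
    Finset.sum_congr rfl fun j _ => Finset.sum_congr rfl fun l _ => by
      simp only [star_mul']
      ring


theorem stmt_5 (a b : ℕ) (ρ : Matrix (Fin a × Fin b) (Fin a × Fin b) ℂ)
    (hρ : ρ.PosSemidef) (hTr : ρ.trace = 1)
    (ψ : Fin a → ℂ) (φ : Fin b → ℂ)
    (hψ : ∑ i, Complex.normSq (ψ i) = 1) (hφ : ∑ i, Complex.normSq (φ i) = 1) :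
    Real.sqrt (1 - (star ψ ⬝ᵥ (ptrace₂ ρ *ᵥ ψ)).re)
        + Real.sqrt (1 - (star φ ⬝ᵥ (ptrace₁ ρ *ᵥ φ)).re)
      ≥ (2 / 3) * (1 - ((star fun p : Fin a × Fin b => ψ p.1 * φ p.2) ⬝ᵥ
          (ρ *ᵥ fun p : Fin a × Fin b => ψ p.1 * φ p.2)).re) := by
  set A := vecMulVec ψ (star ψ) with hA
  set B := vecMulVec φ (star φ) with hB
  have hψsum : ∑ k, star (ψ k) * ψ k = (1 : ℂ) := by
    have : ∑ k, star (ψ k) * ψ k = ((∑ k, Complex.normSq (ψ k) : ℝ) : ℂ) := by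
      push_cast
      exact Finset.sum_congr rfl fun k _ => by
        rw [Complex.normSq_eq_conj_mul_self]; rfl
    rw [this, hψ]; norm_num
  have hφsum : ∑ k, star (φ k) * φ k = (1 : ℂ) := by
    have : ∑ k, star (φ k) * φ k = ((∑ k, Complex.normSq (φ k) : ℝ) : ℂ) := by
      push_cast
      exact Finset.sum_congr rfl fun k _ => by
        rw [Complex.normSq_eq_conj_mul_self]; rfl
    rw [this, hφ]; norm_num
  have hA2 : A * A = A := by
    ext i j
    simp only [hA, Matrix.mul_apply, vecMulVec_apply, Pi.star_apply]
    calc ∑ k, ψ i * star (ψ k) * (ψ k * star (ψ j))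
        = (∑ k, star (ψ k) * ψ k) * (ψ i * star (ψ j)) := by
          rw [Finset.sum_mul]
          exact Finset.sum_congr rfl fun k _ => by ring
      _ = ψ i * star (ψ j) := by rw [hψsum, one_mul]
  have hB2 : B * B = B := by
    ext i j
    simp only [hB, Matrix.mul_apply, vecMulVec_apply, Pi.star_apply]
    calc ∑ k, φ i * star (φ k) * (φ k * star (φ j))
        = (∑ k, star (φ k) * φ k) * (φ i * star (φ j)) := by
          rw [Finset.sum_mul]
          exact Finset.sum_congr rfl fun k _ => by ring
      _ = φ i * star (φ j) := by rw [hφsum, one_mul]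
  have hAH : Aᴴ = A := by
    ext i j
    simp [hA, Matrix.conjTranspose_apply, vecMulVec_apply, mul_comm]
  have hBH : Bᴴ = B := by
    ext i j
    simp [hB, Matrix.conjTranspose_apply, vecMulVec_apply, mul_comm]
  set P := A ⊗ₖ (1 : Matrix (Fin b) (Fin b) ℂ) with hPdef
  set Q := (1 : Matrix (Fin a) (Fin a) ℂ) ⊗ₖ B with hQdef
  have hP2 : P * P = P := by
    rw [hPdef, ← Matrix.mul_kronecker_mul, hA2, Matrix.one_mul]
  have hQ2 : Q * Q = Q := by
    rw [hQdef, ← Matrix.mul_kronecker_mul, hB2, Matrix.one_mul]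
  have hPH : Pᴴ = P := by
    ext p q
    simp only [hPdef, hA, Matrix.conjTranspose_apply, kroneckerMap_apply, Matrix.one_apply,
      vecMulVec_apply, Pi.star_apply, star_mul', apply_ite (star : ℂ → ℂ), star_one, star_zero,
      star_star, eq_comm]
    ring_nf
  have hQH : Qᴴ = Q := by
    ext p q
    simp only [hQdef, hB, Matrix.conjTranspose_apply, kroneckerMap_apply, Matrix.one_apply,
      vecMulVec_apply, Pi.star_apply, star_mul', apply_ite (star : ℂ → ℂ), star_one, star_zero,
      star_star, eq_comm]
    ring_nf
  have hPQ : P * Q = A ⊗ₖ B := by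
    rw [hPdef, hQdef, ← Matrix.mul_kronecker_mul, Matrix.mul_one, Matrix.one_mul]
  have hQP : Q * P = A ⊗ₖ B := by
    rw [hPdef, hQdef, ← Matrix.mul_kronecker_mul, Matrix.mul_one, Matrix.one_mul]
  -- positivity facts
  have hPpsd : P.PosSemidef := psd_of_proj hPH hP2
  have hQpsd : Q.PosSemidef := psd_of_proj hQH hQ2
  have h1P : ((1 : Matrix (Fin a × Fin b) (Fin a × Fin b) ℂ) - P).PosSemidef := by
    refine psd_of_proj ?_ ?_
    · rw [Matrix.conjTranspose_sub, Matrix.conjTranspose_one, hPH]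
    · simp only [Matrix.mul_sub, Matrix.sub_mul, Matrix.mul_one, Matrix.one_mul, hP2]
      abel
  have h1Q : ((1 : Matrix (Fin a × Fin b) (Fin a × Fin b) ℂ) - Q).PosSemidef := by
    refine psd_of_proj ?_ ?_
    · rw [Matrix.conjTranspose_sub, Matrix.conjTranspose_one, hQH]
    · simp only [Matrix.mul_sub, Matrix.sub_mul, Matrix.mul_one, Matrix.one_mul, hQ2]
      abel
  set M := ((1 : Matrix (Fin a × Fin b) (Fin a × Fin b) ℂ) - P) * (1 - Q) * (1 - P) with hMdef
  have hMpsd : M.PosSemidef := by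
    have h := h1Q.mul_mul_conjTranspose_same ((1 : Matrix (Fin a × Fin b) (Fin a × Fin b) ℂ) - P)
    rwa [Matrix.conjTranspose_sub, Matrix.conjTranspose_one, hPH] at h
  have hPQP : P * Q * P = P * Q := by
    rw [Matrix.mul_assoc, hQP, hPQ, hPdef, ← Matrix.mul_kronecker_mul, hA2, Matrix.one_mul]
  have hMeq : M = 1 - P - Q + P * Q := by
    rw [hMdef]
    simp only [Matrix.mul_sub, Matrix.sub_mul, Matrix.mul_one, Matrix.one_mul, hP2, hPQP]
    rw [show Q * P = P * Q from by rw [hQP, hPQ]]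
    abel
  -- trace identities
  set cA := star ψ ⬝ᵥ (ptrace₂ ρ *ᵥ ψ) with hcA
  set cB := star φ ⬝ᵥ (ptrace₁ ρ *ᵥ φ) with hcB
  set cAB := ((star fun p : Fin a × Fin b => ψ p.1 * φ p.2) ⬝ᵥ
          (ρ *ᵥ fun p : Fin a × Fin b => ψ p.1 * φ p.2)) with hcAB
  have tA : (ρ * P).trace = cA := traceA_eq a b ρ ψ
  have tB : (ρ * Q).trace = cB := traceB_eq a b ρ φ
  have tAB : (ρ * (P * Q)).trace = cAB := by rw [hPQ]; exact traceAB_eq a b ρ ψ φ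
  -- inequalities
  have h1 : 0 ≤ cA.re := by
    have := trace_mul_re_nonneg' hρ hPpsd; rwa [tA] at this
  have h2 : cA.re ≤ 1 := by
    have h := trace_mul_re_nonneg' hρ h1P
    rw [Matrix.mul_sub, Matrix.mul_one, Matrix.trace_sub, hTr, tA] at h
    simpa using h
  have h3 : 0 ≤ cB.re := by
    have := trace_mul_re_nonneg' hρ hQpsd; rwa [tB] at this
  have h4 : cB.re ≤ 1 := by
    have h := trace_mul_re_nonneg' hρ h1Q
    rw [Matrix.mul_sub, Matrix.mul_one, Matrix.trace_sub, hTr, tB] at h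
    simpa using h
  have h5 : 0 ≤ 1 - cA.re - cB.re + cAB.re := by
    have h := trace_mul_re_nonneg' hρ hMpsd
    rw [hMeq] at h
    have hexp : ρ * (1 - P - Q + P * Q) = ρ - ρ * P - ρ * Q + ρ * (P * Q) := by
      simp only [Matrix.mul_sub, Matrix.mul_add, Matrix.mul_one, Matrix.mul_assoc]
    rw [hexp, Matrix.trace_add, Matrix.trace_sub, Matrix.trace_sub, hTr, tA, tB, tAB] at h
    simpa using h
  -- final arithmetic
  have hx : 1 - cA.re ≤ Real.sqrt (1 - cA.re) := by
    nlinarith [Real.sq_sqrt (by linarith : (0:ℝ) ≤ 1 - cA.re),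
      Real.sqrt_nonneg (1 - cA.re), Real.sqrt_le_sqrt (by linarith : 1 - cA.re ≤ 1),
      Real.sqrt_one]
  have hy : 1 - cB.re ≤ Real.sqrt (1 - cB.re) := by
    nlinarith [Real.sq_sqrt (by linarith : (0:ℝ) ≤ 1 - cB.re),
      Real.sqrt_nonneg (1 - cB.re), Real.sqrt_le_sqrt (by linarith : 1 - cB.re ≤ 1),
      Real.sqrt_one]
  have hxn := Real.sqrt_nonneg (1 - cA.re)
  have hyn := Real.sqrt_nonneg (1 - cB.re)
  linarith
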